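/- Let p(z) be a polynomial of degree n having all its zeros on the circle |z| = K with 0 < K ≤ 1. Then for every R ≥ 1 and every positive integer s, (max_{|z|=R} |p(z)|)^s ≤ [(K^{n-1}(1+K) + (R^{ns} − 1)) / (K^{n-1} + K^n)] · (max_{|z|=1} |p(z)|)^s. -/

import Mathlib

noncomputable def polyMax (p : Polynomial ℂ) (r : ℝ) : ℝ :=
  ⨆ z : Metric.sphere (0 : ℂ) r, ‖p.eval (z : ℂ)‖

/-!
Write `M(q, r)` for the maximum of `|q|` on `|z| = r`. The heart of the proof is the derivative
estimate `M(p', 1) ≤ n / (K ^ (n - 1) + K ^ n) * M(p, 1)`, obtained from three facts: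
* on `|z| = K` one has `2 K |p'(z)| ≤ n M(p, K)`: since every zero lies on that circle, the
  logarithmic derivative gives `|z p'(z)| = |n p(z) - z p'(z)|` there, while for `|c| > M(p, K)`
  all zeros of `p - c` lie outside the circle, which gives `|z p'(z)| ≤ |n (p(z) - c) - z p'(z)|`;
  choosing the argument of `c` turns the two relations into the bound;
* `M(p', 1) ≤ K ^ (1 - n) M(p', K)`, the growth of a polynomial outside a disc;
* `M(p, K) ≤ (2 K / (1 + K)) ^ n M(p, 1)`, comparing `|z - v|` with `|z / K - v|` factor by
  factor.
Along the ray from the unit circle to a maximum point on `|z| = R`, the derivative of `p ^ s` is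
then at most `s t ^ (n s - 1) M(p', 1) M(p, 1) ^ (s - 1)`, which integrates to the claimed bound.
-/

open Polynomial Metric

section PolyMax

variable {p : ℂ[X]} {r : ℝ}

lemma bddAbove_range_norm_eval_sphere (p : ℂ[X]) (r : ℝ) :
    BddAbove (Set.range fun z : sphere (0 : ℂ) r => ‖p.eval (z : ℂ)‖) := by
  simpa only [Set.image_eq_range] using
    (isCompact_sphere (0 : ℂ) r).bddAbove_image (f := fun z => ‖p.eval z‖) (by fun_prop)

lemma norm_eval_le_polyMax {z : ℂ} (hz : ‖z‖ = r) : ‖p.eval z‖ ≤ polyMax p r :=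
  le_ciSup (bddAbove_range_norm_eval_sphere p r) ⟨z, mem_sphere_zero_iff_norm.mpr hz⟩

lemma polyMax_le {C : ℝ} (hr : 0 ≤ r) (h : ∀ z : ℂ, ‖z‖ = r → ‖p.eval z‖ ≤ C) :
    polyMax p r ≤ C :=
  haveI : Nonempty (sphere (0 : ℂ) r) := (NormedSpace.sphere_nonempty.mpr hr).coe_sort
  ciSup_le fun z => h z (mem_sphere_zero_iff_norm.mp z.2)

lemma polyMax_nonneg (p : ℂ[X]) (r : ℝ) : 0 ≤ polyMax p r :=
  Real.iSup_nonneg fun _ => norm_nonneg _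

lemma exists_norm_eval_eq_polyMax (p : ℂ[X]) (hr : 0 ≤ r) :
    ∃ z : ℂ, ‖z‖ = r ∧ ‖p.eval z‖ = polyMax p r := by
  obtain ⟨z, hz, hmax⟩ := (isCompact_sphere (0 : ℂ) r).exists_isMaxOn
    (NormedSpace.sphere_nonempty.mpr hr) (f := fun z => ‖p.eval z‖) (by fun_prop)
  have hz : ‖z‖ = r := mem_sphere_zero_iff_norm.mp hz
  exact ⟨z, hz, le_antisymm (norm_eval_le_polyMax hz) <|
    polyMax_le hr fun w hw => hmax (mem_sphere_zero_iff_norm.mpr hw)⟩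

lemma norm_eval_le_polyMax_of_norm_le (hr : 0 < r) {z : ℂ} (hz : ‖z‖ ≤ r) :
    ‖p.eval z‖ ≤ polyMax p r := by
  refine Complex.norm_le_of_forall_mem_frontier_norm_le (U := ball 0 r) isBounded_ball
    p.differentiable.diffContOnCl (fun w hw => ?_) ?_
  · rw [frontier_ball 0 hr.ne'] at hw
    exact norm_eval_le_polyMax (mem_sphere_zero_iff_norm.mp hw)
  · rwa [closure_ball 0 hr.ne', mem_closedBall_zero_iff]

end PolyMax

lemma eval_reflect_inv_mul_pow {f : ℂ[X]} {N : ℕ} (hf : f.natDegree ≤ N) {x : ℂ}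
    (hx : x ≠ 0) :
    (reflect N f).eval x⁻¹ * x ^ N = f.eval x := by
  let := invertibleOfNonzero hx
  rw [← invOf_eq_inv]
  exact eval₂_reflect_mul_pow (RingHom.id ℂ) x N f hf

/-- `z ↦ z ^ N f(1 / z)` is a polynomial, so the maximum modulus principle inside the circle of
radius `ρ⁻¹` bounds `f` outside the circle of radius `ρ`. -/
lemma norm_eval_le_pow_mul_polyMax {f : ℂ[X]} {N : ℕ} (hf : f.natDegree ≤ N) {ρ r : ℝ}
    (hρ : 0 < ρ) (hρr : ρ ≤ r) {z : ℂ} (hz : ‖z‖ = r) :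
    ‖f.eval z‖ ≤ (r / ρ) ^ N * polyMax f ρ := by
  have hr : 0 < r := hρ.trans_le hρr
  have hz0 : z ≠ 0 := norm_pos_iff.mp (hz ▸ hr)
  have hreflect : polyMax (reflect N f) ρ⁻¹ ≤ polyMax f ρ / ρ ^ N := by
    refine polyMax_le (by positivity) fun w hw => (le_div_iff₀ (by positivity)).mpr ?_
    have hw' : ‖w⁻¹‖ = ρ := by rw [norm_inv, hw, inv_inv]
    calc ‖(reflect N f).eval w‖ * ρ ^ N = ‖f.eval w⁻¹‖ := by
          rw [← eval_reflect_inv_mul_pow hf (norm_pos_iff.mp (by rw [hw']; exact hρ)),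
            inv_inv, norm_mul, norm_pow, hw']
      _ ≤ polyMax f ρ := norm_eval_le_polyMax hw'
  have hz' : ‖z⁻¹‖ ≤ ρ⁻¹ := by rw [norm_inv, hz]; exact inv_anti₀ hρ hρr
  calc ‖f.eval z‖ = ‖(reflect N f).eval z⁻¹‖ * r ^ N := by
        rw [← eval_reflect_inv_mul_pow hf hz0, norm_mul, norm_pow, hz]
    _ ≤ polyMax f ρ / ρ ^ N * r ^ N := by
        gcongr
        exact (norm_eval_le_polyMax_of_norm_le (inv_pos.mpr hρ) hz').trans hreflect
    _ = (r / ρ) ^ N * polyMax f ρ := by rw [div_pow]; ring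

lemma polyMax_le_pow_mul_polyMax {f : ℂ[X]} {N : ℕ} (hf : f.natDegree ≤ N) {ρ r : ℝ}
    (hρ : 0 < ρ) (hρr : ρ ≤ r) : polyMax f r ≤ (r / ρ) ^ N * polyMax f ρ :=
  polyMax_le (hρ.le.trans hρr) fun _ hz => norm_eval_le_pow_mul_polyMax hf hρ hρr hz

section ComplexGeometry

variable {z v w : ℂ}

lemma one_sub_two_mul_re_div_sub (h : z ≠ v) :
    1 - 2 * (z / (z - v)).re = (‖v‖ ^ 2 - ‖z‖ ^ 2) / ‖z - v‖ ^ 2 := by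
  have h0 : Complex.normSq (z - v) ≠ 0 := by simpa [sub_eq_zero] using h
  rw [Complex.div_re, Complex.sq_norm, Complex.sq_norm, Complex.sq_norm]
  field_simp
  simp only [Complex.normSq_apply, Complex.sub_re, Complex.sub_im]
  ring

lemma two_mul_re_div_sub_le (h : z ≠ v) (hzv : ‖z‖ ≤ ‖v‖) : 2 * (z / (z - v)).re ≤ 1 := by
  have := one_sub_two_mul_re_div_sub h
  have : 0 ≤ (‖v‖ ^ 2 - ‖z‖ ^ 2) / ‖z - v‖ ^ 2 := by
    have := pow_le_pow_left₀ (norm_nonneg z) hzv 2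
    positivity
  linarith

lemma two_mul_re_div_sub_eq (h : z ≠ v) (hzv : ‖z‖ = ‖v‖) : 2 * (z / (z - v)).re = 1 := by
  linarith [one_sub_two_mul_re_div_sub h,
    show (‖v‖ ^ 2 - ‖z‖ ^ 2) / ‖z - v‖ ^ 2 = 0 by simp [hzv]]

lemma norm_ofReal_sub_sq (m : ℝ) (w : ℂ) :
    ‖(m : ℂ) - w‖ ^ 2 = ‖w‖ ^ 2 + m * (m - 2 * w.re) := by
  simp only [Complex.sq_norm, Complex.normSq_apply, Complex.sub_re, Complex.sub_im,
    Complex.ofReal_re, Complex.ofReal_im]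
  ring

lemma norm_le_norm_ofReal_sub {m : ℝ} (hm : 0 ≤ m) (hw : 2 * w.re ≤ m) :
    ‖w‖ ≤ ‖(m : ℂ) - w‖ := by
  have := norm_ofReal_sub_sq m w
  have : 0 ≤ m * (m - 2 * w.re) := mul_nonneg hm (by linarith)
  nlinarith [norm_nonneg w, norm_nonneg ((m : ℂ) - w)]

lemma norm_eq_norm_ofReal_sub {m : ℝ} (hw : 2 * w.re = m) : ‖w‖ = ‖(m : ℂ) - w‖ := by
  have := norm_ofReal_sub_sq m w
  rw [hw, sub_self, mul_zero, add_zero] at this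
  exact ((pow_left_inj₀ (norm_nonneg _) (norm_nonneg _) two_ne_zero).mp this).symm

lemma add_one_div_two_mul_norm_sub_le {r : ℝ} (hr : 1 ≤ r) (h : ‖w‖ ≤ ‖z‖) :
    (r + 1) / 2 * ‖z - w‖ ≤ ‖(r : ℂ) * z - w‖ := by
  have hwz := pow_le_pow_left₀ (norm_nonneg w) h 2
  simp only [Complex.sq_norm, Complex.normSq_apply] at hwz
  refine le_of_pow_le_pow_left₀ two_ne_zero (norm_nonneg _) ?_
  rw [mul_pow]
  simp only [Complex.sq_norm, Complex.normSq_apply, Complex.sub_re, Complex.sub_im,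
    Complex.mul_re, Complex.mul_im, Complex.ofReal_re, Complex.ofReal_im]
  nlinarith [mul_nonneg (sub_nonneg.mpr hwz) (by nlinarith : (0 : ℝ) ≤ r ^ 2 - 1),
    mul_nonneg (sq_nonneg (r - 1))
      (add_nonneg (sq_nonneg (z.re + w.re)) (sq_nonneg (z.im + w.im)))]

lemma two_mul_norm_le_of_norm_le_norm_sub {a b : ℂ} {m M : ℝ} (hm : 0 < m) (hM : 0 ≤ M)
    (hba : ‖b‖ = ‖a‖) (h : ∀ c : ℂ, M < ‖c‖ → ‖a‖ ≤ ‖b - m * c‖) : 2 * ‖a‖ ≤ m * M := by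
  -- take `c` in the direction of `b`, so that `‖b - m c‖ = |‖b‖ - m ‖c‖|`
  have key : ∀ t > M, 2 * ‖a‖ ≤ m * t := by
    intro t ht
    have ht0 : 0 < t := hM.trans_lt ht
    have hmt : 0 < m * t := mul_pos hm ht0
    rcases eq_or_ne b 0 with hb | hb
    · rw [← hba, hb, norm_zero, mul_zero]
      exact hmt.le
    have hb : 0 < ‖b‖ := norm_pos_iff.mpr hb
    have hc : ‖((t / ‖b‖ : ℝ) : ℂ) * b‖ = t := by
      rw [norm_mul, Complex.norm_real, Real.norm_eq_abs, abs_of_pos (by positivity),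
        div_mul_cancel₀ _ hb.ne']
    have : ‖a‖ ≤ |‖a‖ - m * t| :=
      calc ‖a‖ ≤ ‖b - m * (((t / ‖b‖ : ℝ) : ℂ) * b)‖ := h _ (by rw [hc]; exact ht)
        _ = ‖((1 - m * t / ‖b‖ : ℝ) : ℂ) * b‖ := by push_cast; ring_nf
        _ = |(1 - m * t / ‖b‖) * ‖b‖| := by
            rw [norm_mul, Complex.norm_real, Real.norm_eq_abs, abs_mul, abs_norm]
        _ = |‖a‖ - m * t| := by rw [sub_mul, div_mul_cancel₀ _ hb.ne', one_mul, hba]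
    rcases le_abs'.mp this with h | h <;> linarith
  rw [← div_le_iff₀' hm]
  exact le_of_forall_gt_imp_ge_of_dense fun t ht => (div_le_iff₀' hm).mpr (key t ht)

end ComplexGeometry

section Roots

variable {p : ℂ[X]} {z : ℂ}

lemma norm_eval_eq_norm_leadingCoeff_mul_prod (p : ℂ[X]) (x : ℂ) :
    ‖p.eval x‖ = ‖p.leadingCoeff‖ * (p.roots.map fun v => ‖x - v‖).prod := by
  rw [(IsAlgClosed.splits p).eval_eq_prod_roots, norm_mul]
  congr 1
  exact (map_multiset_prod (normHom : ℂ →*₀ ℝ) _).trans (by rw [Multiset.map_map]; rfl)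

lemma mul_eval_derivative_eq (hz : p.eval z ≠ 0) :
    z * p.derivative.eval z = p.eval z * (p.roots.map fun v => z / (z - v)).sum := by
  rw [(IsAlgClosed.splits p).eval_derivative_eq_eval_mul_sum hz, mul_left_comm,
    ← Multiset.sum_map_mul_left]
  simp only [mul_one_div]

lemma ne_of_eval_ne_zero_of_mem_roots (hz : p.eval z ≠ 0) {v : ℂ} (hv : v ∈ p.roots) : z ≠ v :=
  fun h => hz (h ▸ isRoot_of_mem_roots hv)

lemma Complex.re_multiset_sum (m : Multiset ℂ) : m.sum.re = (m.map Complex.re).sum :=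
  map_multiset_sum Complex.reAddGroupHom m

lemma two_mul_re_sum_div_sub_le (hz : p.eval z ≠ 0) (hroots : ∀ v ∈ p.roots, ‖z‖ ≤ ‖v‖) :
    2 * (p.roots.map fun v => z / (z - v)).sum.re ≤ p.natDegree := by
  simp only [Complex.re_multiset_sum, ← Multiset.sum_map_mul_left, Multiset.map_map,
    Function.comp_def]
  refine (Multiset.sum_le_card_nsmul _ 1 ?_).trans_eq ?_
  · simp only [Multiset.mem_map]
    rintro _ ⟨v, hv, rfl⟩
    exact two_mul_re_div_sub_le (ne_of_eval_ne_zero_of_mem_roots hz hv) (hroots v hv)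
  · simp [IsAlgClosed.card_roots_eq_natDegree]

lemma two_mul_re_sum_div_sub_eq (hz : p.eval z ≠ 0) (hroots : ∀ v ∈ p.roots, ‖v‖ = ‖z‖) :
    2 * (p.roots.map fun v => z / (z - v)).sum.re = p.natDegree := by
  simp only [Complex.re_multiset_sum, ← Multiset.sum_map_mul_left, Multiset.map_map,
    Function.comp_def]
  rw [Multiset.map_congr rfl fun v hv =>
      two_mul_re_div_sub_eq (ne_of_eval_ne_zero_of_mem_roots hz hv) (hroots v hv).symm,
    Multiset.map_const', Multiset.sum_replicate, IsAlgClosed.card_roots_eq_natDegree,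
    nsmul_eq_mul, mul_one]

lemma norm_mul_eval_derivative_le (hz : p.eval z ≠ 0) (hroots : ∀ v ∈ p.roots, ‖z‖ ≤ ‖v‖) :
    ‖z * p.derivative.eval z‖ ≤ ‖p.natDegree * p.eval z - z * p.derivative.eval z‖ := by
  rw [mul_eval_derivative_eq hz, mul_comm (p.natDegree : ℂ), ← mul_sub, norm_mul, norm_mul]
  gcongr
  exact_mod_cast
    norm_le_norm_ofReal_sub (Nat.cast_nonneg _) (two_mul_re_sum_div_sub_le hz hroots)

lemma norm_mul_eval_derivative_eq (hroots : ∀ v ∈ p.roots, ‖v‖ = ‖z‖) :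
    ‖z * p.derivative.eval z‖ = ‖p.natDegree * p.eval z - z * p.derivative.eval z‖ := by
  by_cases hz : p.eval z = 0
  · simp [hz]
  rw [mul_eval_derivative_eq hz, mul_comm (p.natDegree : ℂ), ← mul_sub, norm_mul, norm_mul]
  congr 1
  exact_mod_cast norm_eq_norm_ofReal_sub (two_mul_re_sum_div_sub_eq hz hroots)

end Roots

section Derivative

variable {p : ℂ[X]} {z : ℂ} {K : ℝ}

lemma norm_mul_eval_derivative_le_of_polyMax_lt (hK : 0 < K) (hz : ‖z‖ ≤ K) {c : ℂ}
    (hc : polyMax p K < ‖c‖) :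
    ‖z * p.derivative.eval z‖ ≤ ‖p.natDegree * (p.eval z - c) - z * p.derivative.eval z‖ := by
  have hne : ∀ v : ℂ, ‖v‖ ≤ K → (p - C c).eval v ≠ 0 := fun v hv h => by
    rw [eval_sub, eval_C, sub_eq_zero] at h
    exact (norm_eval_le_polyMax_of_norm_le hK hv).not_gt (h ▸ hc)
  have := norm_mul_eval_derivative_le (hne z hz) fun v hv =>
    hz.trans (not_lt.mp fun hvK => hne v hvK.le (isRoot_of_mem_roots hv))
  simpa only [derivative_sub, derivative_C, sub_zero, natDegree_sub_C, eval_sub, eval_C]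
    using this

lemma two_mul_norm_mul_eval_derivative_le (hK : 0 < K) (hroots : ∀ v ∈ p.roots, ‖v‖ = K)
    (hz : ‖z‖ = K) : 2 * ‖z * p.derivative.eval z‖ ≤ p.natDegree * polyMax p K := by
  rcases Nat.eq_zero_or_pos p.natDegree with hn | hn
  · simp only [derivative_of_natDegree_zero hn, eval_zero, mul_zero, norm_zero]
    exact mul_nonneg (Nat.cast_nonneg _) (polyMax_nonneg p K)
  refine two_mul_norm_le_of_norm_le_norm_sub (Nat.cast_pos.mpr hn) (polyMax_nonneg p K)
    (norm_mul_eval_derivative_eq fun v hv => (hroots v hv).trans hz.symm).symm fun c hc => ?_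
  have := norm_mul_eval_derivative_le_of_polyMax_lt hK hz.le hc
  rwa [mul_sub, sub_right_comm, ← Complex.ofReal_natCast] at this

lemma polyMax_le_of_roots_norm_le (hK0 : 0 < K) (hK1 : K ≤ 1)
    (hroots : ∀ v ∈ p.roots, ‖v‖ ≤ K) :
    polyMax p K ≤ (2 * K / (1 + K)) ^ p.natDegree * polyMax p 1 := by
  refine polyMax_le hK0.le fun z hz => ?_
  set a := (K⁻¹ + 1) / 2
  have ha : a⁻¹ = 2 * K / (1 + K) := by
    simp only [a]
    field_simp
  set ζ : ℂ := (K⁻¹ : ℝ) * z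
  have hζ : ‖ζ‖ = 1 := by
    rw [norm_mul, hz, Complex.norm_real, Real.norm_eq_abs, abs_of_pos (inv_pos.mpr hK0),
      inv_mul_cancel₀ hK0.ne']
  have hcompare : a ^ p.natDegree * ‖p.eval z‖ ≤ ‖p.eval ζ‖ := by
    rw [norm_eval_eq_norm_leadingCoeff_mul_prod, norm_eval_eq_norm_leadingCoeff_mul_prod,
      mul_left_comm, ← IsAlgClosed.card_roots_eq_natDegree, ← Multiset.prod_replicate,
      ← Multiset.map_const', ← Multiset.prod_map_mul]
    gcongr
    refine Multiset.prod_map_le_prod_map₀ _ _ (fun _ _ => by positivity) fun v hv => ?_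
    exact add_one_div_two_mul_norm_sub_le ((one_le_inv₀ hK0).mpr hK1)
      (by rw [hz]; exact hroots v hv)
  rw [← ha, inv_pow, le_inv_mul_iff₀ (by positivity)]
  exact hcompare.trans (norm_eval_le_polyMax hζ)

lemma polyMax_derivative_le (hK0 : 0 < K) (hK1 : K ≤ 1) (hroots : ∀ v ∈ p.roots, ‖v‖ = K) :
    polyMax p.derivative 1 ≤
      p.natDegree / (K ^ (p.natDegree - 1) + K ^ p.natDegree) * polyMax p 1 := by
  have hgrowth :
      polyMax p.derivative 1 ≤ (1 / K) ^ (p.natDegree - 1) * polyMax p.derivative K :=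
    polyMax_le_pow_mul_polyMax (natDegree_derivative_le p) hK0 hK1
  have hmalik : polyMax p.derivative K ≤ p.natDegree * polyMax p K / (2 * K) := by
    refine polyMax_le hK0.le fun z hz => (le_div_iff₀ (by positivity)).mpr ?_
    have := two_mul_norm_mul_eval_derivative_le hK0 hroots hz
    rw [norm_mul, hz] at this
    linarith
  have hlower := polyMax_le_of_roots_norm_le hK0 hK1 fun v hv => (hroots v hv).le
  have hM := polyMax_nonneg p 1
  calc polyMax p.derivative 1
      ≤ (1 / K) ^ (p.natDegree - 1) *
          (p.natDegree * ((2 * K / (1 + K)) ^ p.natDegree * polyMax p 1) / (2 * K)) := by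
        refine hgrowth.trans ?_
        gcongr
        exact hmalik.trans (by gcongr)
    _ ≤ _ := ?_
  rcases p.natDegree with _ | m
  · simp
  have h2K : (2 * K / (1 + K)) ^ m ≤ 1 :=
    pow_le_one₀ (by positivity) ((div_le_one (by positivity)).mpr (by linarith))
  calc _ = (m + 1 : ℕ) / (K ^ m + K ^ (m + 1)) * polyMax p 1 * (2 * K / (1 + K)) ^ m := by
        have : 0 < 1 + K := by linarith
        rw [Nat.add_sub_cancel, show K ^ m + K ^ (m + 1) = K ^ m * (1 + K) by ring, pow_succ,
          one_div, inv_pow]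
        field_simp
    _ ≤ _ := mul_le_of_le_one_right (by positivity) h2K

end Derivative

lemma polyMax_pow_le_of_polyMax_derivative_le {p : ℂ[X]} {n : ℕ} (hn : 1 ≤ n)
    (hdeg : p.natDegree ≤ n) {L : ℝ} (hL : polyMax p.derivative 1 ≤ L * polyMax p 1)
    {R : ℝ} (hR : 1 ≤ R) (s : ℕ) :
    polyMax p R ^ s ≤ (1 + L * (R ^ (n * s) - 1) / n) * polyMax p 1 ^ s := by
  set M := polyMax p 1
  have hR0 : 0 < R := one_pos.trans_le hR
  obtain ⟨z₀, hz₀, hmax⟩ := exists_norm_eval_eq_polyMax p hR0.le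
  set u : ℂ := z₀ / R
  have hu : ‖u‖ = 1 := by
    rw [norm_div, hz₀, Complex.norm_real, Real.norm_eq_abs, abs_of_pos hR0, div_self hR0.ne']
  have hut : ∀ t : ℝ, 0 ≤ t → ‖u * t‖ = t := fun t ht => by
    rw [norm_mul, hu, one_mul, Complex.norm_real, Real.norm_eq_abs, abs_of_nonneg ht]
  have hf : ∀ t : ℝ, HasDerivAt (fun t : ℝ => p.eval (u * t) ^ s)
      (s * p.eval (u * t) ^ (s - 1) * (p.derivative.eval (u * t) * u)) t := fun t => by
    have h := (p.hasDerivAt (u * t)).comp (t : ℂ) ((hasDerivAt_id (t : ℂ)).const_mul u)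
    rw [mul_one] at h
    exact (h.comp_ofReal).pow s
  have hB : ∀ t : ℝ, HasDerivAt (fun t : ℝ => (1 + L * (t ^ (n * s) - 1) / n) * M ^ s)
      (L * s * t ^ (n * s - 1) * M ^ s) t := fun t => by
    have hn0 : (n : ℝ) ≠ 0 := by positivity
    refine ((((hasDerivAt_pow (n * s) t).sub_const 1).const_mul L).div_const (n : ℝ))
      |>.const_add 1 |>.mul_const (M ^ s) |>.congr_deriv ?_
    push_cast
    field_simp
  have hbound : ∀ t ∈ Set.Ico 1 R,
      ‖s * p.eval (u * t) ^ (s - 1) * (p.derivative.eval (u * t) * u)‖ ≤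
        L * s * t ^ (n * s - 1) * M ^ s := by
    rintro t ⟨ht, -⟩
    have hnorm := hut t (zero_le_one.trans ht)
    have hp : ‖p.eval (u * t)‖ ≤ t ^ n * M := by
      simpa using norm_eval_le_pow_mul_polyMax hdeg one_pos ht hnorm
    have hp' : ‖p.derivative.eval (u * t)‖ ≤ t ^ (n - 1) * (L * M) := by
      refine (norm_eval_le_pow_mul_polyMax ((natDegree_derivative_le p).trans
        (Nat.sub_le_sub_right hdeg 1)) one_pos ht hnorm).trans ?_
      rw [div_one]
      gcongr
    rcases s with _ | k
    · simp
    calc ‖((k + 1 : ℕ) : ℂ) * p.eval (u * t) ^ k * (p.derivative.eval (u * t) * u)‖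
        = (k + 1) * ‖p.eval (u * t)‖ ^ k * ‖p.derivative.eval (u * t)‖ := by
          rw [norm_mul, norm_mul, norm_mul, norm_pow, hu, mul_one, Complex.norm_natCast]
          push_cast
          rfl
      _ ≤ (k + 1) * (t ^ n * M) ^ k * (t ^ (n - 1) * (L * M)) := by
          have hM : 0 ≤ M := polyMax_nonneg p 1
          gcongr
      _ = _ := by
          rw [show n * (k + 1) - 1 = n * k + (n - 1) by rw [Nat.mul_succ]; omega]
          push_cast
          ring
  have hstart : ‖p.eval (u * ((1 : ℝ) : ℂ)) ^ s‖ ≤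
      (1 + L * ((1 : ℝ) ^ (n * s) - 1) / n) * M ^ s := by
    rw [one_pow, sub_self, mul_zero, zero_div, add_zero, one_mul, norm_pow]
    exact pow_le_pow_left₀ (norm_nonneg _) (norm_eval_le_polyMax (hut 1 zero_le_one)) s
  have hend := image_norm_le_of_norm_deriv_right_le_deriv_boundary
    (fun t _ => (hf t).continuousAt.continuousWithinAt) (fun t _ => (hf t).hasDerivWithinAt)
    hstart hB hbound (Set.right_mem_Icc.mpr hR)
  rwa [norm_pow, show u * R = z₀ from div_mul_cancel₀ _ (by exact_mod_cast hR0.ne'), hmax]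
    at hend

theorem dewan_ahuja_general (p : Polynomial ℂ) (n : ℕ) (hn : 1 ≤ n)
    (hdeg : p.natDegree = n) (K : ℝ) (hK0 : 0 < K) (hK1 : K ≤ 1)
    (hroots : ∀ z : ℂ, p.eval z = 0 → ‖z‖ = K)
    (R : ℝ) (hR : 1 ≤ R) (s : ℕ) :
    (polyMax p R) ^ s ≤
      ((K ^ (n - 1) * (1 + K) + (R ^ (n * s) - 1)) / (K ^ (n - 1) + K ^ n)) *
        (polyMax p 1) ^ s := by
  have hderiv := polyMax_derivative_le hK0 hK1 fun v hv => hroots v (isRoot_of_mem_roots hv)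
  rw [hdeg] at hderiv
  refine (polyMax_pow_le_of_polyMax_derivative_le hn hdeg.le hderiv hR s).trans_eq ?_
  have hK : K ^ (n - 1) + K ^ n = K ^ (n - 1) * (1 + K) := by
    rw [mul_add, mul_one, ← pow_succ, Nat.sub_add_cancel hn]
  have hn0 : (n : ℝ) ≠ 0 := by positivity
  have : 0 < 1 + K := by linarith
  rw [hK]
  field_simp

theorem dewan_ahuja (p : Polynomial ℂ) (n : ℕ) (hn : 1 ≤ n)
    (hdeg : p.natDegree = n) (K : ℝ) (hK0 : 0 < K) (hK1 : K ≤ 1)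
    (hroots : ∀ z : ℂ, p.eval z = 0 → ‖z‖ = K)
    (R : ℝ) (hR : 1 ≤ R) (s : ℕ) (hs : 1 ≤ s) :
    (polyMax p R) ^ s ≤
      ((K ^ (n - 1) * (1 + K) + (R ^ (n * s) - 1)) / (K ^ (n - 1) + K ^ n)) *
        (polyMax p 1) ^ s :=
  dewan_ahuja_general p n hn hdeg K hK0 hK1 hroots R hR s
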